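/- Let h ∈ ℚ⟦t⟧ with h(0) = 0 and c_m = m! · [t^m] h, where c_1 = 1, and let c ∈ ℚ. Define p_n(x) = n! · [t^n] exp(x·h(t)). Then for all n ≥ 0, (x + c·n) · p_n(x) = x · \left( p_n(x) + c \sum_{j=1}^{n} \binom{n}{j} j · c_j · p_{n-j}(x) \right) as polynomials in x. -/

import Mathlib

/-!
`expComp g` is the composite `exp ∘ g`, so the chain rule gives `E' = E g'` for `E = expComp g`.
Applying the Euler operator `X d⁄dX`, which multiplies the `n`-th coefficient by `n`, and reading off
exponential-generating-function coefficients (binomial convolution) yields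
`n eₙ = ∑ⱼ (n choose j) j gⱼ eₙ₋ⱼ`. For `g = x h` one has `gⱼ = x cⱼ` and `eₙ = pₙ(x)`, and adding
`x pₙ(x)` to `c` times this recurrence is the claim.
-/

open PowerSeries

/-- `expComp g = exp(g)` for a power series `g` with zero constant term:
the `n`-th coefficient is `∑_{j=0}^{n} [tⁿ](gʲ)/j!`. -/
noncomputable def expComp {A : Type*} [CommRing A] [Algebra ℚ A] (g : PowerSeries A) :
    PowerSeries A :=
  PowerSeries.mk fun n =>
    ∑ j ∈ Finset.range (n + 1), ((j.factorial : ℚ)⁻¹) • (PowerSeries.coeff (R := A) n (g ^ j))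

open Finset Nat

section CommSemiring

variable {R : Type*} [CommSemiring R]

theorem coeff_pow_eq_zero_of_lt {g : R⟦X⟧} (hg : constantCoeff g = 0) {n j : ℕ} (hnj : n < j) :
    coeff n (g ^ j) = 0 :=
  X_pow_dvd_iff.mp (pow_dvd_pow_of_dvd (X_dvd_iff.mpr hg) j) n hnj

theorem coeff_X_mul_derivative (f : R⟦X⟧) (n : ℕ) :
    coeff n (X * d⁄dX R f) = n * coeff n f := by
  cases n with
  | zero => simp
  | succ n => rw [coeff_succ_X_mul, coeff_derivative, mul_comm]; push_cast; rfl

theorem factorial_mul_coeff_mul (f g : R⟦X⟧) (n : ℕ) :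
    (n ! : R) * coeff n (f * g) = ∑ j ∈ range (n + 1),
      (n.choose j : R) * (j ! * coeff j f) * ((n - j)! * coeff (n - j) g) := by
  rw [coeff_mul, Nat.sum_antidiagonal_eq_sum_range_succ (fun i j => coeff i f * coeff j g),
    mul_sum]
  refine sum_congr rfl fun j hj => ?_
  have hfac : (n.choose j : R) * j ! * (n - j)! = n ! := by
    rw [← Nat.choose_mul_factorial_mul_factorial (mem_range_succ_iff.mp hj)]
    push_cast
    ring
  rw [← hfac]
  ring

end CommSemiring

section ExpComp

variable {A : Type*} [CommRing A] [Algebra ℚ A]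

theorem expComp_eq_subst_exp {g : A⟦X⟧} (hg : constantCoeff g = 0) :
    expComp g = (exp A).subst g := by
  ext n
  rw [coeff_subst' (HasSubst.of_constantCoeff_zero' hg), expComp, coeff_mk,
    finsum_eq_sum_of_support_subset (s := range (n + 1))]
  · simp [coeff_exp, Algebra.smul_def]
  · intro j hj
    simp only [Function.mem_support, coe_range, Set.mem_Iio] at hj ⊢
    by_contra! hnj
    exact hj (by rw [coeff_pow_eq_zero_of_lt hg (by omega), smul_zero])

theorem derivative_expComp {g : A⟦X⟧} (hg : constantCoeff g = 0) :
    d⁄dX A (expComp g) = expComp g * d⁄dX A g := by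
  rw [expComp_eq_subst_exp hg, derivative_subst (HasSubst.of_constantCoeff_zero' hg),
    derivative_exp]

theorem natCast_mul_factorial_mul_coeff_expComp {g : A⟦X⟧} (hg : constantCoeff g = 0) (n : ℕ) :
    (n : A) * (n ! * coeff n (expComp g)) = ∑ j ∈ Icc 1 n,
      (n.choose j : A) * j * (j ! * coeff j g) * ((n - j)! * coeff (n - j) (expComp g)) := by
  have hEuler : X * d⁄dX A (expComp g) = (X * d⁄dX A g) * expComp g := by
    rw [derivative_expComp hg]; ring
  calc (n : A) * (n ! * coeff n (expComp g))
      = n ! * coeff n (X * d⁄dX A (expComp g)) := by rw [coeff_X_mul_derivative]; ring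
    _ = ∑ j ∈ range (n + 1), (n.choose j : A) * j * (j ! * coeff j g) *
          ((n - j)! * coeff (n - j) (expComp g)) := by
        rw [hEuler, factorial_mul_coeff_mul]
        simp only [coeff_X_mul_derivative]
        exact sum_congr rfl fun j _ => by ring
    _ = _ := by
        refine (sum_subset (fun j hj => mem_range_succ_iff.mpr (mem_Icc.mp hj).2)
          fun j hjn hj => ?_).symm
        obtain rfl : j = 0 := by
          simp only [mem_range, mem_Icc, not_and, not_le] at hjn hj; omega
        simp

end ExpComp

theorem stmt12_general {A : Type*} [CommRing A] [Algebra ℚ A] (h : PowerSeries ℚ)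
    (hh : PowerSeries.constantCoeff (R := ℚ) h = 0) (c' : ℕ → ℚ)
    (hc : ∀ m, c' m = (m.factorial : ℚ) * PowerSeries.coeff (R := ℚ) m h)
    (c : ℚ) (p : ℕ → A → A)
    (hp : ∀ n x, p n x = (n.factorial : A) *
      PowerSeries.coeff (R := A) n (expComp (PowerSeries.C (R := A) x * h.map (algebraMap ℚ A))))
    (n : ℕ) (x : A) :
    (x + algebraMap ℚ A c * (n : A)) * p n x =
      x * (p n x + algebraMap ℚ A c * ∑ j ∈ Finset.Icc 1 n,
        (n.choose j : A) * (j : A) * algebraMap ℚ A (c' j) * p (n - j) x) := by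
  set g := C x * h.map (algebraMap ℚ A)
  have hg : constantCoeff g = 0 := by simp [g, ← coeff_zero_eq_constantCoeff_apply, coeff_map, hh]
  have hpg (m : ℕ) : p m x = m ! * coeff m (expComp g) := hp m x
  have hcoeff (j : ℕ) : (j ! : A) * coeff j g = x * algebraMap ℚ A (c' j) := by
    simp only [g, coeff_C_mul, coeff_map, hc, map_mul, map_natCast]
    ring
  have key : (n : A) * p n x = x * ∑ j ∈ Icc 1 n,
      (n.choose j : A) * j * algebraMap ℚ A (c' j) * p (n - j) x := by
    simp only [hpg, natCast_mul_factorial_mul_coeff_expComp hg, hcoeff, mul_sum]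
    exact sum_congr rfl fun j _ => by ring
  linear_combination algebraMap ℚ A c * key

theorem stmt12 {A : Type*} [CommRing A] [Algebra ℚ A] (h : PowerSeries ℚ)
    (hh : PowerSeries.constantCoeff (R := ℚ) h = 0) (c' : ℕ → ℚ)
    (hc : ∀ m, c' m = (m.factorial : ℚ) * PowerSeries.coeff (R := ℚ) m h) (hc1 : c' 1 = 1)
    (c : ℚ) (p : ℕ → A → A)
    (hp : ∀ n x, p n x = (n.factorial : A) *
      PowerSeries.coeff (R := A) n (expComp (PowerSeries.C (R := A) x * h.map (algebraMap ℚ A))))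
    (n : ℕ) (x : A) :
    (x + algebraMap ℚ A c * (n : A)) * p n x =
      x * (p n x + algebraMap ℚ A c * ∑ j ∈ Finset.Icc 1 n,
        (n.choose j : A) * (j : A) * algebraMap ℚ A (c' j) * p (n - j) x) :=
  stmt12_general h hh c' hc c p hp n x
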